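/- arXiv:2007.11398 — 2 statements merged into one kernel-verified Lean document; each statement's English description precedes it below -/
import Mathlib

section
/- Let h = ⟨O, po, rf⟩ be a history, ww a store order (i.e., ww = ⋃_{x ∈ Var} ww_x where each ww_x is a strict total order on the writes to variable x), and tw a strict total order on the write events WR with ww ⊆ tw. If the graph G_loc^ww = (O, po-loc ∪ rf ∪ ww ∪ fr) with fr = rf⁻¹ ∘ ww is acyclic, then the graph G_loc^tw = (O, po-loc ∪ rf ∪ tw ∪ fr) is also acyclic. -/
/-- A relation (graph) is acyclic if its transitive closure is irreflexive. -/
def Acyc {α : Type*} (R : Set (α × α)) : Prop :=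
  ∀ a, ¬ Relation.TransGen (fun x y => (x, y) ∈ R) a a

/-- `t` is a strict total order on the set `S`. -/
def StrictTotalOn {α : Type*} (S : Set α) (t : Set (α × α)) : Prop :=
  (∀ p ∈ t, p.1 ∈ S ∧ p.2 ∈ S) ∧
  (∀ a, (a, a) ∉ t) ∧
  (∀ a b c, (a, b) ∈ t → (b, c) ∈ t → (a, c) ∈ t) ∧
  (∀ a ∈ S, ∀ b ∈ S, a ≠ b → (a, b) ∈ t ∨ (b, a) ∈ t)

/-- Composition `rf⁻¹ ∘ S`: `(r,w)` iff there is `w'` with `(w',r) ∈ rf` and `(w',w) ∈ S`. -/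
def compRF {α : Type*} (rf S : Set (α × α)) : Set (α × α) :=
  {p | ∃ w', (w', p.1) ∈ rf ∧ (w', p.2) ∈ S}

/-- Restriction of a relation to pairs of events on variable `x`. -/
def restrVar {α X : Type*} (var : α → X) (S : Set (α × α)) (x : X) : Set (α × α) :=
  {p ∈ S | var p.1 = x ∧ var p.2 = x}

/-- Union over all variables of the restrictions: the same-variable part of `S`. -/
def sameVar {α X : Type*} (var : α → X) (S : Set (α × α)) : Set (α × α) :=
  ⋃ x : X, restrVar var S x

/-- `po-loc`: restriction of `po` to events on the same variable. -/
def poloc {α X : Type*} (var : α → X) (po : Set (α × α)) : Set (α × α) :=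
  {p ∈ po | var p.1 = var p.2}

/-- A store order: a union over variables of strict total orders on the writes to
that variable, with no edges between distinct variables. -/
def IsStoreOrder {α X : Type*} (var : α → X) (Wr : Set α) (ww : Set (α × α)) : Prop :=
  (∀ p ∈ ww, var p.1 = var p.2) ∧
  ∀ x : X, StrictTotalOn {w ∈ Wr | var w = x} (restrVar var ww x)

/-- `r[S]`: every write outside `S` (within `Wr`) precedes every write in `S`. -/
def rSet {α : Type*} (Wr S : Set α) : Set (α × α) :=
  {p | p.1 ∈ Wr \ S ∧ p.2 ∈ S}

theorem linearization_preserves_Gloc_acyclicity {α X : Type*} [Fintype α]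
    (var : α → X) (Wr : Set α) (po rf : Set (α × α))
    (hpo_irr : ∀ a, (a, a) ∉ po)
    (hpo_trans : ∀ a b c, (a, b) ∈ po → (b, c) ∈ po → (a, c) ∈ po)
    (hrf : ∀ p ∈ rf, p.1 ∈ Wr ∧ p.2 ∉ Wr ∧ var p.1 = var p.2)
    (hrf_uniq : ∀ r ∉ Wr, ∃! w, (w, r) ∈ rf)
    (ww tw : Set (α × α))
    (hww : IsStoreOrder var Wr ww)
    (htw : StrictTotalOn Wr tw)
    (hsub : ww ⊆ tw)
    (hacyc : Acyc (poloc var po ∪ rf ∪ ww ∪ compRF rf ww)) :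
    Acyc (poloc var po ∪ rf ∪ tw ∪ compRF rf ww) := by
  intro a hcyc
  set Q : Set (α × α) := poloc var po ∪ rf ∪ ww ∪ compRF rf ww with hQ
  -- every Q-edge is same-variable
  have hQvar : ∀ p ∈ Q, var p.1 = var p.2 := by
    rintro ⟨u, v⟩ (((h | h) | h) | h)
    · exact h.2
    · exact (hrf _ h).2.2
    · exact hww.1 _ h
    · obtain ⟨w', h1, h2⟩ := h
      exact ((hrf _ h1).2.2).symm.trans (hww.1 _ h2)
  have hQT : Relation.TransGen (fun x y => (x, y) ∈ Q) = fun x y => Relation.TransGen (fun x y => (x, y) ∈ Q) x y := rfl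
  have hvarT : ∀ {u v}, Relation.ReflTransGen (fun x y => (x, y) ∈ Q) u v → var u = var v := by
    intro u v h
    induction h with
    | refl => rfl
    | tail _ h ih => exact ih.trans (hQvar _ h)
  -- key lemma: Q-path between two writes gives a tw edge
  have key : ∀ u ∈ Wr, ∀ v ∈ Wr, Relation.TransGen (fun x y => (x, y) ∈ Q) u v → (u, v) ∈ tw := by
    intro u hu v hv h
    have hne : u ≠ v := by rintro rfl; exact hacyc u h
    have hvar : var u = var v := hvarT h.to_reflTransGen
    obtain ⟨_, _, _, htot⟩ := hww.2 (var v)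
    rcases htot u ⟨hu, hvar⟩ v ⟨hv, rfl⟩ hne with hc | hc
    · exact hsub hc.1
    · exact absurd (h.tail (show (v, u) ∈ Q from Or.inl (Or.inr hc.1))) (hacyc u)
  -- decomposition invariant
  have main : ∀ b, Relation.TransGen (fun x y => (x, y) ∈ poloc var po ∪ rf ∪ tw ∪ compRF rf ww) a b →
      Relation.TransGen (fun x y => (x, y) ∈ Q) a b ∨
      ∃ w1 w2, w1 ∈ Wr ∧ w2 ∈ Wr ∧ Relation.ReflTransGen (fun x y => (x, y) ∈ Q) a w1 ∧
        (w1, w2) ∈ tw ∧ Relation.ReflTransGen (fun x y => (x, y) ∈ Q) w2 b := by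
    intro b h
    induction h with
    | single h =>
      rcases h with ((h | h) | h) | h
      · exact Or.inl (Relation.TransGen.single (Or.inl (Or.inl (Or.inl h))))
      · exact Or.inl (Relation.TransGen.single (Or.inl (Or.inl (Or.inr h))))
      · obtain ⟨h1, h2⟩ := htw.1 _ h
        exact Or.inr ⟨_, _, h1, h2, Relation.ReflTransGen.refl, h, Relation.ReflTransGen.refl⟩
      · exact Or.inl (Relation.TransGen.single (Or.inr h))
    | tail _ h ih =>
      rename_i b c _
      rcases h with ((h | h) | h) | h
      · rcases ih with ih | ⟨w1, w2, h1, h2, h3, h4, h5⟩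
        · exact Or.inl (ih.tail (Or.inl (Or.inl (Or.inl h))))
        · exact Or.inr ⟨w1, w2, h1, h2, h3, h4, h5.tail (Or.inl (Or.inl (Or.inl h)))⟩
      · rcases ih with ih | ⟨w1, w2, h1, h2, h3, h4, h5⟩
        · exact Or.inl (ih.tail (Or.inl (Or.inl (Or.inr h))))
        · exact Or.inr ⟨w1, w2, h1, h2, h3, h4, h5.tail (Or.inl (Or.inl (Or.inr h)))⟩
      · -- tw edge b → c
        obtain ⟨hb, hc⟩ := htw.1 _ h
        rcases ih with ih | ⟨w1, w2, h1, h2, h3, h4, h5⟩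
        · exact Or.inr ⟨b, c, hb, hc, ih.to_reflTransGen, h, Relation.ReflTransGen.refl⟩
        · -- w2 ⟶* b, tw b c : combine to tw w1 c
          have htw' : (w1, c) ∈ tw := by
            rcases h5.cases_head with rfl | ⟨d, hd1, hd2⟩
            · exact htw.2.2.1 _ _ _ h4 h
            · have : (w2, b) ∈ tw :=
                key w2 h2 b hb (Relation.TransGen.head' hd1 hd2)
              exact htw.2.2.1 _ _ _ (htw.2.2.1 _ _ _ h4 this) h
          exact Or.inr ⟨w1, c, h1, hc, h3, htw', Relation.ReflTransGen.refl⟩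
      · rcases ih with ih | ⟨w1, w2, h1, h2, h3, h4, h5⟩
        · exact Or.inl (ih.tail (Or.inr h))
        · exact Or.inr ⟨w1, w2, h1, h2, h3, h4, h5.tail (Or.inr h)⟩
  rcases main a hcyc with h | ⟨w1, w2, h1, h2, h3, h4, h5⟩
  · exact hacyc a h
  · have h6 : Relation.ReflTransGen (fun x y => (x, y) ∈ Q) w2 w1 := h5.trans h3
    rcases h6.cases_head with rfl | ⟨d, hd1, hd2⟩
    · exact htw.2.1 _ h4
    · have : (w2, w1) ∈ tw := key w2 h2 w1 h1 (Relation.TransGen.head' hd1 hd2)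
      exact htw.2.1 w1 (htw.2.2.1 _ _ _ h4 this)
end

section
/- Let h be a history and MM = (po-mm, rf-mm) a memory model with po-mm ⊆ po and rf-mm ⊆ rf. Then h is MM-valid (there exists a store order ww such that G_loc^ww = (O, po-loc ∪ rf ∪ ww ∪ fr) and G_mm^ww = (O, po-mm ∪ rf-mm ∪ ww ∪ fr) are acyclic, where fr = rf⁻¹ ∘ ww) if and only if h is MM-consistent (there exists a strict total order tw on the writes WR such that G_loc = (O, po-loc ∪ rf ∪ tw ∪ cf) and G_mm = (O, po-mm ∪ rf-mm ∪ tw ∪ cf) are acyclic, where cf = rf⁻¹ ∘ ⋃_{x} tw_x). -/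
/-!
A store order `ww` and a total write order `tw` determine each other through the same-variable
part. From `tw` one gets `ww := sameVar var tw`, whose graphs are subgraphs of those of `tw`.
Conversely, given `ww`, let `tw` be a linear extension, restricted to writes, of the transitive
closure of `G_mm^ww`; it contains `ww`, and since `ww` is already total on the writes to each
variable, its same-variable part is exactly `ww`, so `cf = fr`. Adding `tw` keeps a graph `G`
acyclic as soon as `tw` contains every `G`-path between two writes: a cycle through `tw`-edges
then collapses to a `tw`-cycle. For `G_mm` this holds by construction; for `G_loc` every path
stays on one variable, so by acyclicity a path between two writes is a `ww`-edge.
-/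

open Relation

theorem Acyc.mono {α : Type*} {R S : Set (α × α)} (h : R ⊆ S) (hS : Acyc S) : Acyc R :=
  fun a hc => hS a (TransGen.mono (fun _ _ hxy => h hxy) a a hc)

theorem eq_of_transGen {α β : Type*} {G : Set (α × α)} {f : α → β}
    (hG : ∀ p ∈ G, f p.1 = f p.2) {a b : α} (h : TransGen (fun x y => (x, y) ∈ G) a b) :
    f a = f b := by
  induction h with
  | single h => exact hG _ h
  | tail _ h ih => exact ih.trans (hG _ h)

section SameVar

variable {α X : Type*} (var : α → X)

theorem sameVar_eq (S : Set (α × α)) : sameVar var S = {p ∈ S | var p.1 = var p.2} := by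
  ext p
  simp only [sameVar, restrVar, Set.mem_iUnion, Set.mem_ofPred_eq]
  exact ⟨fun ⟨_, h, h1, h2⟩ => ⟨h, h1.trans h2.symm⟩, fun ⟨h, h1⟩ => ⟨var p.2, h, h1, rfl⟩⟩

theorem sameVar_subset (S : Set (α × α)) : sameVar var S ⊆ S := by
  rw [sameVar_eq]
  exact fun _ hp => hp.1

theorem restrVar_sameVar (S : Set (α × α)) (x : X) :
    restrVar var (sameVar var S) x = restrVar var S x := by
  ext p
  simp only [restrVar, sameVar_eq, Set.mem_ofPred_eq]
  exact ⟨fun ⟨⟨hp, _⟩, h1, h2⟩ => ⟨hp, h1, h2⟩, fun ⟨hp, h1, h2⟩ => ⟨⟨hp, h1.trans h2.symm⟩, h1, h2⟩⟩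

theorem StrictTotalOn.restrVar {Wr : Set α} {tw : Set (α × α)} (htw : StrictTotalOn Wr tw)
    (x : X) : StrictTotalOn {w ∈ Wr | var w = x} (restrVar var tw x) := by
  obtain ⟨hdom, hirr, htrans, htot⟩ := htw
  refine ⟨fun p ⟨hp, h1, h2⟩ => ⟨⟨(hdom p hp).1, h1⟩, (hdom p hp).2, h2⟩,
    fun a ha => hirr a ha.1,
    fun a b c ⟨hab, h1, _⟩ ⟨hbc, _, h4⟩ => ⟨htrans a b c hab hbc, h1, h4⟩, ?_⟩
  rintro a ⟨ha, hax⟩ b ⟨hb, hbx⟩ hne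
  exact (htot a ha b hb hne).imp (fun h => ⟨h, hax, hbx⟩) (fun h => ⟨h, hbx, hax⟩)

theorem StrictTotalOn.isStoreOrder_sameVar {Wr : Set α} {tw : Set (α × α)}
    (htw : StrictTotalOn Wr tw) : IsStoreOrder var Wr (sameVar var tw) := by
  refine ⟨?_, fun x => ?_⟩
  · rw [sameVar_eq]
    exact fun _ hp => hp.2
  · rw [restrVar_sameVar]
    exact htw.restrVar var x

end SameVar

namespace IsStoreOrder

variable {α X : Type*} {var : α → X} {Wr : Set α} {ww : Set (α × α)}

theorem mem_restrVar (hww : IsStoreOrder var Wr ww) {p : α × α} (hp : p ∈ ww) :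
    p ∈ restrVar var ww (var p.1) :=
  ⟨hp, rfl, (hww.1 p hp).symm⟩

theorem mem_writes (hww : IsStoreOrder var Wr ww) {p : α × α} (hp : p ∈ ww) :
    p.1 ∈ Wr ∧ p.2 ∈ Wr :=
  have h := (hww.2 (var p.1)).1 p (hww.mem_restrVar hp)
  ⟨h.1.1, h.2.1⟩

theorem total (hww : IsStoreOrder var Wr ww) {a b : α} (ha : a ∈ Wr) (hb : b ∈ Wr)
    (hab : var a = var b) (hne : a ≠ b) : (a, b) ∈ ww ∨ (b, a) ∈ ww :=
  ((hww.2 (var a)).2.2.2 a ⟨ha, rfl⟩ b ⟨hb, hab.symm⟩ hne).imp (·.1) (·.1)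

theorem mem_of_transGen (hww : IsStoreOrder var Wr ww) {G : Set (α × α)} (hG : Acyc G)
    (hGvar : ∀ p ∈ G, var p.1 = var p.2) (hwwG : ww ⊆ G) {w w' : α} (hw : w ∈ Wr)
    (hw' : w' ∈ Wr) (h : TransGen (fun x y => (x, y) ∈ G) w w') : (w, w') ∈ ww := by
  have hne : w ≠ w' := by
    rintro rfl
    exact hG w h
  refine (hww.total hw hw' (eq_of_transGen hGvar h) hne).resolve_right fun hback => hG w ?_
  exact h.tail (hwwG hback)

theorem sameVar_eq_of_subset (hww : IsStoreOrder var Wr ww) {tw : Set (α × α)}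
    (htw : StrictTotalOn Wr tw) (hsub : ww ⊆ tw) : sameVar var tw = ww := by
  obtain ⟨hdom, hirr, htrans, -⟩ := htw
  rw [sameVar_eq]
  ext ⟨a, b⟩
  refine ⟨fun ⟨hab, hvar⟩ => ?_, fun hab => ⟨hsub hab, hww.1 _ hab⟩⟩
  have hne : a ≠ b := by
    rintro rfl
    exact hirr a hab
  exact (hww.total (hdom _ hab).1 (hdom _ hab).2 hvar hne).resolve_right
    fun hba => hirr a (htrans a b a hab (hsub hba))

end IsStoreOrder

theorem Acyc.exists_strictTotalOn {α : Type*} {G : Set (α × α)} (hG : Acyc G) (Wr : Set α) :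
    ∃ tw, StrictTotalOn Wr tw ∧
      ∀ w w', w ∈ Wr → w' ∈ Wr → TransGen (fun x y => (x, y) ∈ G) w w' → (w, w') ∈ tw := by
  let r := ReflTransGen fun x y => (x, y) ∈ G
  have hr : IsPartialOrder α r :=
    { refl := fun _ => ReflTransGen.refl
      trans := fun _ _ _ => ReflTransGen.trans
      antisymm := fun a b hab hba => by
        rcases reflTransGen_iff_eq_or_transGen.mp hab with rfl | hba'
        · rfl
        exact (hG b (hba'.trans_right hba)).elim }
  obtain ⟨s, hs, hrs⟩ := extend_partialOrder r
  refine ⟨{p | s p.1 p.2 ∧ p.1 ≠ p.2 ∧ p.1 ∈ Wr ∧ p.2 ∈ Wr}, ⟨fun p hp => hp.2.2,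
    fun a ha => ha.2.1 rfl, ?_, ?_⟩, ?_⟩
  · rintro a b c ⟨hab, hne, ha, -⟩ ⟨hbc, -, -, hc⟩
    refine ⟨hs.trans a b c hab hbc, fun (hac : a = c) => ?_, ha, hc⟩
    subst hac
    exact hne (hs.antisymm a b hab hbc)
  · intro a ha b hb hne
    exact (hs.total a b).imp (fun h => ⟨h, hne, ha, hb⟩) (fun h => ⟨h, hne.symm, hb, ha⟩)
  · intro w w' hw hw' h
    refine ⟨hrs w w' h.to_reflTransGen, fun (hww' : w = w') => ?_, hw, hw'⟩
    subst hww'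
    exact hG w h

theorem Acyc.union_of_transGen_subset {α : Type*} {G tw : Set (α × α)} {Wr : Set α} (hG : Acyc G)
    (hdom : ∀ p ∈ tw, p.1 ∈ Wr ∧ p.2 ∈ Wr) (hirr : ∀ a, (a, a) ∉ tw)
    (htrans : ∀ a b c, (a, b) ∈ tw → (b, c) ∈ tw → (a, c) ∈ tw)
    (hpath : ∀ w w', w ∈ Wr → w' ∈ Wr → TransGen (fun x y => (x, y) ∈ G) w w' → (w, w') ∈ tw) :
    Acyc (G ∪ tw) := by
  let path := ReflTransGen fun x y => (x, y) ∈ G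
  have hpath' : ∀ w w', w ∈ Wr → w' ∈ Wr → path w w' → w = w' ∨ (w, w') ∈ tw :=
    fun w w' hw hw' h => (reflTransGen_iff_eq_or_transGen.mp h).imp Eq.symm
      (hpath w w' hw hw')
  -- a `G ∪ tw`-path using `tw` at all can be rerouted through a single `tw`-edge
  have collapse : ∀ a b, TransGen (fun x y => (x, y) ∈ G ∪ tw) a b →
      TransGen (fun x y => (x, y) ∈ G) a b ∨
        ∃ w w', path a w ∧ (w, w') ∈ tw ∧ path w' b := by
    intro a b h
    induction h with
    | single h =>
      exact h.imp TransGen.single fun h => ⟨_, _, ReflTransGen.refl, h, ReflTransGen.refl⟩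
    | @tail b c _ hbc ih =>
      rcases hbc with hbc | hbc
      · exact ih.imp (·.tail hbc) fun ⟨w, w', h1, ht, h2⟩ => ⟨w, w', h1, ht, h2.tail hbc⟩
      · refine Or.inr ?_
        rcases ih with ih | ⟨w, w', h1, ht, h2⟩
        · exact ⟨b, c, ih.to_reflTransGen, hbc, ReflTransGen.refl⟩
        · refine ⟨w, c, h1, ?_, ReflTransGen.refl⟩
          rcases hpath' w' b (hdom _ ht).2 (hdom _ hbc).1 h2 with rfl | hwb
          · exact htrans _ _ _ ht hbc
          · exact htrans _ _ _ (htrans _ _ _ ht hwb) hbc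
  intro a hc
  rcases collapse a a hc with h | ⟨w, w', h1, ht, h2⟩
  · exact hG a h
  · rcases hpath' w' w (hdom _ ht).2 (hdom _ ht).1 (h2.trans h1) with rfl | hw'w
    · exact hirr _ ht
    · exact hirr _ (htrans _ _ _ ht hw'w)

theorem validity_iff_consistency_general {α X : Type*}
    (var : α → X) (Wr : Set α) (po rf pomm rfmm : Set (α × α))
    (hrf : ∀ p ∈ rf, p.1 ∈ Wr ∧ p.2 ∉ Wr ∧ var p.1 = var p.2) :
    (∃ ww : Set (α × α), IsStoreOrder var Wr ww ∧
        Acyc (poloc var po ∪ rf ∪ ww ∪ compRF rf ww) ∧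
        Acyc (pomm ∪ rfmm ∪ ww ∪ compRF rf ww)) ↔
    (∃ tw : Set (α × α), StrictTotalOn Wr tw ∧
        Acyc (poloc var po ∪ rf ∪ tw ∪ compRF rf (sameVar var tw)) ∧
        Acyc (pomm ∪ rfmm ∪ tw ∪ compRF rf (sameVar var tw))) := by
  constructor
  · rintro ⟨ww, hww, hloc, hmm⟩
    obtain ⟨tw, htw, hpath_tw⟩ := hmm.exists_strictTotalOn Wr
    have hww_tw : ww ⊆ tw := fun p hp =>
      hpath_tw _ _ (hww.mem_writes hp).1 (hww.mem_writes hp).2 (.single (Or.inl (Or.inr hp)))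
    have hloc_var : ∀ p ∈ poloc var po ∪ rf ∪ ww ∪ compRF rf ww, var p.1 = var p.2 := by
      rintro p (((hp | hp) | hp) | ⟨w, hwr, hww'⟩)
      exacts [hp.2, (hrf p hp).2.2, hww.1 p hp, (hrf _ hwr).2.2.symm.trans (hww.1 _ hww')]
    have hloc_tw := hloc.union_of_transGen_subset htw.1 htw.2.1 htw.2.2.1
      fun w w' hw hw' h => hww_tw (hww.mem_of_transGen hloc hloc_var
        (fun _ hp => Or.inl (Or.inr hp)) hw hw' h)
    have hmm_tw := hmm.union_of_transGen_subset htw.1 htw.2.1 htw.2.2.1 hpath_tw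
    refine ⟨tw, htw, ?_⟩
    rw [hww.sameVar_eq_of_subset htw hww_tw]
    refine ⟨hloc_tw.mono ?_, hmm_tw.mono ?_⟩ <;>
    · intro p
      simp only [Set.mem_union]
      tauto
  · rintro ⟨tw, htw, hloc, hmm⟩
    refine ⟨sameVar var tw, htw.isStoreOrder_sameVar var, hloc.mono ?_, hmm.mono ?_⟩ <;>
    · gcongr
      exact sameVar_subset var tw

theorem validity_iff_consistency {α X : Type*} [Fintype α]
    (var : α → X) (Wr : Set α) (po rf pomm rfmm : Set (α × α))
    (hpo_irr : ∀ a, (a, a) ∉ po)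
    (hpo_trans : ∀ a b c, (a, b) ∈ po → (b, c) ∈ po → (a, c) ∈ po)
    (hrf : ∀ p ∈ rf, p.1 ∈ Wr ∧ p.2 ∉ Wr ∧ var p.1 = var p.2)
    (hrf_uniq : ∀ r ∉ Wr, ∃! w, (w, r) ∈ rf)
    (hpomm : pomm ⊆ po) (hrfmm : rfmm ⊆ rf) :
    (∃ ww : Set (α × α), IsStoreOrder var Wr ww ∧
        Acyc (poloc var po ∪ rf ∪ ww ∪ compRF rf ww) ∧
        Acyc (pomm ∪ rfmm ∪ ww ∪ compRF rf ww)) ↔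
    (∃ tw : Set (α × α), StrictTotalOn Wr tw ∧
        Acyc (poloc var po ∪ rf ∪ tw ∪ compRF rf (sameVar var tw)) ∧
        Acyc (pomm ∪ rfmm ∪ tw ∪ compRF rf (sameVar var tw))) :=
  validity_iff_consistency_general var Wr po rf pomm rfmm hrf
end
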